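/- The set S = {x ∈ ℤ² : x₁ + 2x₂ ≢ 0 and x₁ + 2x₂ ≢ 1 (mod 5)} satisfies N_S(x) ≤ 4 for every x ∈ S and has density exactly 3/5. -/
import Mathlib


open Filter Topology

/-- `y` is a neighbor of `x` in the 8-point (Moore) neighborhood of `ℤ²`. -/
def IsNbr (x y : ℤ × ℤ) : Prop :=
  y ≠ x ∧ |y.1 - x.1| ≤ 1 ∧ |y.2 - x.2| ≤ 1

/-- `N_S(x)`: the number of neighbors of `x` lying in `S`. -/
noncomputable def nbrCount (S : Set (ℤ × ℤ)) (x : ℤ × ℤ) : ℕ :=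
  Set.ncard {y ∈ S | IsNbr x y}

/-- The box `B_r = {x : |x₁| < r, |x₂| < r}`. -/
def box (r : ℕ) : Set (ℤ × ℤ) :=
  {x | |x.1| < (r : ℤ) ∧ |x.2| < (r : ℤ)}

/-- `S` has density `d`: the sequence `|S ∩ B_r| / (2r-1)²` tends to `d`. -/
def HasDensity (S : Set (ℤ × ℤ)) (d : ℝ) : Prop :=
  Tendsto (fun r : ℕ => (Set.ncard (S ∩ box r) : ℝ) / (2 * (r : ℝ) - 1) ^ 2) atTop (𝓝 d)

/-- The set of `x ∈ ℤ²` with `x₁ + 2x₂ ≢ 0, 1 (mod 5)`. -/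
def degFourSet : Set (ℤ × ℤ) :=
  {x | ¬ x.1 + 2 * x.2 ≡ 0 [ZMOD 5] ∧ ¬ x.1 + 2 * x.2 ≡ 1 [ZMOD 5]}

/-! ### Auxiliary lemmas -/

private lemma window5 (k a : ℤ) :
    ((Finset.Ico a (a+5)).filter (fun t => (t+k)%5 = 2 ∨ (t+k)%5 = 3 ∨ (t+k)%5 = 4)).card = 3 := by
  have he : Finset.Ico a (a+5) = {a, a+1, a+2, a+3, a+4} := by
    ext t
    simp only [Finset.mem_Ico, Finset.mem_insert, Finset.mem_singleton]
    omega
  rw [he, Finset.card_filter]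
  rw [Finset.sum_insert (by simp only [Finset.mem_insert, Finset.mem_singleton]; omega),
      Finset.sum_insert (by simp only [Finset.mem_insert, Finset.mem_singleton]; omega),
      Finset.sum_insert (by simp only [Finset.mem_insert, Finset.mem_singleton]; omega),
      Finset.sum_insert (by simp only [Finset.mem_insert, Finset.mem_singleton]; omega),
      Finset.sum_singleton]
  split_ifs <;> omega

private lemma row_bounds (k : ℤ) : ∀ (n : ℕ), ∀ (a : ℤ),
    3 * (n:ℤ) - 12 ≤ 5 * (((Finset.Ico a (a + (n:ℤ))).filter (fun t => (t+k)%5 = 2 ∨ (t+k)%5 = 3 ∨ (t+k)%5 = 4)).card : ℤ) ∧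
    5 * (((Finset.Ico a (a + (n:ℤ))).filter (fun t => (t+k)%5 = 2 ∨ (t+k)%5 = 3 ∨ (t+k)%5 = 4)).card : ℤ) ≤ 3 * (n:ℤ) + 12 := by
  intro n
  induction n using Nat.strong_induction_on with
  | _ n ih =>
    intro a
    by_cases h5 : 5 ≤ n
    · have e2 : a + (n : ℤ) = (a + 5) + ((n - 5 : ℕ) : ℤ) := by omega
      obtain ⟨ih1, ih2⟩ := ih (n - 5) (by omega) (a + 5)
      have e1 : ((Finset.Ico a (a + (n:ℤ))).filter (fun t => (t+k)%5 = 2 ∨ (t+k)%5 = 3 ∨ (t+k)%5 = 4)).card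
          = 3 + ((Finset.Ico (a+5) ((a+5) + ((n-5:ℕ):ℤ))).filter (fun t => (t+k)%5 = 2 ∨ (t+k)%5 = 3 ∨ (t+k)%5 = 4)).card := by
        have hu := Finset.Ico_union_Ico_eq_Ico (show a ≤ a+5 by omega)
          (show a+5 ≤ a+5+((n-5:ℕ):ℤ) by omega)
        rw [e2, ← hu, Finset.filter_union,
            Finset.card_union_of_disjoint
              (Finset.disjoint_filter_filter (Finset.Ico_disjoint_Ico_consecutive _ _ _)),
            window5]
      rw [e1]
      constructor <;> [skip; skip] <;> push_cast <;> omega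
    · have hle : ((Finset.Ico a (a + (n:ℤ))).filter (fun t => (t+k)%5 = 2 ∨ (t+k)%5 = 3 ∨ (t+k)%5 = 4)).card ≤ n := by
        calc ((Finset.Ico a (a + (n:ℤ))).filter _).card ≤ (Finset.Ico a (a + (n:ℤ))).card :=
              Finset.card_filter_le _ _
          _ = n := by rw [Int.card_Ico]; omega
      constructor <;> omega

private lemma hbox (r : ℕ) : degFourSet ∩ box r =
    ↑((Finset.Ico (1-(r:ℤ)) (r:ℤ) ×ˢ Finset.Ico (1-(r:ℤ)) (r:ℤ)).filter
      (fun x => (x.1 + 2*x.2)%5 = 2 ∨ (x.1+2*x.2)%5 = 3 ∨ (x.1+2*x.2)%5 = 4)) := by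
  ext ⟨x1, x2⟩
  simp only [degFourSet, box, Set.mem_inter_iff, Set.mem_setOf_eq, Finset.coe_filter,
    Finset.mem_product, Finset.mem_Ico, Int.ModEq, abs_lt]
  omega

private lemma key (r : ℕ) : ((degFourSet ∩ box r).ncard : ℤ) =
    ∑ b ∈ Finset.Ico (1-(r:ℤ)) (r:ℤ),
      (((Finset.Ico (1-(r:ℤ)) (r:ℤ)).filter
        (fun t => (t + 2*b)%5 = 2 ∨ (t+2*b)%5 = 3 ∨ (t+2*b)%5 = 4)).card : ℤ) := by
  have : (degFourSet ∩ box r).ncard =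
      ∑ b ∈ Finset.Ico (1-(r:ℤ)) (r:ℤ),
        ((Finset.Ico (1-(r:ℤ)) (r:ℤ)).filter
          (fun t => (t + 2*b)%5 = 2 ∨ (t+2*b)%5 = 3 ∨ (t+2*b)%5 = 4)).card := by
    rw [hbox r, Set.ncard_coe_finset, Finset.card_filter, Finset.sum_product, Finset.sum_comm]
    exact Finset.sum_congr rfl (fun b _ => (Finset.card_filter _ _).symm)
  rw [this]
  push_cast
  rfl

private lemma aux_card_le (x : ℤ×ℤ) (a b c d : ℤ×ℤ)
    (h : {y ∈ degFourSet | IsNbr x y} ⊆ {a, b, c, d}) :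
    nbrCount degFourSet x ≤ 4 := by
  have h2 := Set.ncard_insert_le a ({b,c,d} : Set (ℤ×ℤ))
  have h3 := Set.ncard_insert_le b ({c,d} : Set (ℤ×ℤ))
  have h4 := Set.ncard_insert_le c ({d} : Set (ℤ×ℤ))
  have h5 : ({d} : Set (ℤ×ℤ)).ncard = 1 := Set.ncard_singleton d
  have h1 := Set.ncard_le_ncard h (Set.toFinite _)
  unfold nbrCount
  omega

private lemma part1 : ∀ x ∈ degFourSet, nbrCount degFourSet x ≤ 4 := by
  intro x hx
  obtain ⟨h0, h1⟩ := hx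
  rw [Int.ModEq] at h0 h1
  have hm : (x.1 + 2*x.2) % 5 = 2 ∨ (x.1 + 2*x.2) % 5 = 3 ∨ (x.1 + 2*x.2) % 5 = 4 := by omega
  rcases hm with hm | hm | hm
  · apply aux_card_le x (x.1+1, x.2) (x.1-1, x.2+1) (x.1, x.2+1) (x.1-1, x.2-1)
    rintro ⟨y1,y2⟩ ⟨⟨hy0, hy1⟩, hne, hb1, hb2⟩
    rw [Int.ModEq] at hy0 hy1
    rw [abs_le] at hb1 hb2
    have hne' : y1 ≠ x.1 ∨ y2 ≠ x.2 := by
      by_contra hc; push_neg at hc; exact hne (Prod.ext_iff.mpr ⟨hc.1, hc.2⟩)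
    simp only [Set.mem_insert_iff, Set.mem_singleton_iff, Prod.mk.injEq, Prod.ext_iff]
    omega
  · apply aux_card_le x (x.1+1, x.2-1) (x.1-1, x.2) (x.1+1, x.2) (x.1-1, x.2+1)
    rintro ⟨y1,y2⟩ ⟨⟨hy0, hy1⟩, hne, hb1, hb2⟩
    rw [Int.ModEq] at hy0 hy1
    rw [abs_le] at hb1 hb2
    have hne' : y1 ≠ x.1 ∨ y2 ≠ x.2 := by
      by_contra hc; push_neg at hc; exact hne (Prod.ext_iff.mpr ⟨hc.1, hc.2⟩)
    simp only [Set.mem_insert_iff, Set.mem_singleton_iff, Prod.mk.injEq, Prod.ext_iff]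
    omega
  · apply aux_card_le x (x.1, x.2-1) (x.1+1, x.2+1) (x.1+1, x.2-1) (x.1-1, x.2)
    rintro ⟨y1,y2⟩ ⟨⟨hy0, hy1⟩, hne, hb1, hb2⟩
    rw [Int.ModEq] at hy0 hy1
    rw [abs_le] at hb1 hb2
    have hne' : y1 ≠ x.1 ∨ y2 ≠ x.2 := by
      by_contra hc; push_neg at hc; exact hne (Prod.ext_iff.mpr ⟨hc.1, hc.2⟩)
    simp only [Set.mem_insert_iff, Set.mem_singleton_iff, Prod.mk.injEq, Prod.ext_iff]
    omega

private lemma count_bounds (r : ℕ) (hr : 1 ≤ r) :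
    (2*(r:ℤ)-1) * (3*(2*(r:ℤ)-1) - 12) ≤ 5 * ((degFourSet ∩ box r).ncard : ℤ) ∧
    5 * ((degFourSet ∩ box r).ncard : ℤ) ≤ (2*(r:ℤ)-1) * (3*(2*(r:ℤ)-1) + 12) := by
  rw [key r, Finset.mul_sum]
  have hcard : ((Finset.Ico (1-(r:ℤ)) (r:ℤ)).card : ℤ) = 2*(r:ℤ)-1 := by
    rw [Int.card_Ico]; omega
  have hterm : ∀ b ∈ Finset.Ico (1-(r:ℤ)) (r:ℤ),
      (3*(2*(r:ℤ)-1) - 12 ≤ 5 * (((Finset.Ico (1-(r:ℤ)) (r:ℤ)).filter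
        (fun t => (t + 2*b)%5 = 2 ∨ (t+2*b)%5 = 3 ∨ (t+2*b)%5 = 4)).card : ℤ)) ∧
      (5 * (((Finset.Ico (1-(r:ℤ)) (r:ℤ)).filter
        (fun t => (t + 2*b)%5 = 2 ∨ (t+2*b)%5 = 3 ∨ (t+2*b)%5 = 4)).card : ℤ) ≤ 3*(2*(r:ℤ)-1) + 12) := by
    intro b _
    have h := row_bounds (2*b) (2*r-1) (1-(r:ℤ))
    rw [show (1-(r:ℤ)) + ((2*r-1:ℕ):ℤ) = (r:ℤ) from by omega] at h
    constructor
    · refine le_trans (by omega) h.1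
    · refine le_trans h.2 (by omega)
  constructor
  · have h1 := Finset.sum_le_sum (fun b hb => (hterm b hb).1)
    rw [Finset.sum_const, nsmul_eq_mul] at h1
    calc (2*(r:ℤ)-1) * (3*(2*(r:ℤ)-1) - 12)
        = ((Finset.Ico (1-(r:ℤ)) (r:ℤ)).card : ℤ) * (3*(2*(r:ℤ)-1) - 12) := by rw [hcard]
      _ ≤ _ := h1
  · have h1 := Finset.sum_le_sum (fun b hb => (hterm b hb).2)
    rw [Finset.sum_const, nsmul_eq_mul] at h1
    calc _ ≤ ((Finset.Ico (1-(r:ℤ)) (r:ℤ)).card : ℤ) * (3*(2*(r:ℤ)-1) + 12) := h1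
      _ = (2*(r:ℤ)-1) * (3*(2*(r:ℤ)-1) + 12) := by rw [hcard]

private lemma part2 : HasDensity degFourSet (3/5) := by
  unfold HasDensity
  have hL : Tendsto (fun r : ℕ => 2*(r:ℝ)-1) atTop atTop := by
    have h1 : Tendsto (fun r : ℕ => 2*(r:ℝ)) atTop atTop :=
      Tendsto.const_mul_atTop (by norm_num) tendsto_natCast_atTop_atTop
    have := tendsto_atTop_add_const_right atTop (-1 : ℝ) h1
    refine this.congr (fun x => by ring)
  have h0 : Tendsto (fun r : ℕ => (12/5)/(2*(r:ℝ)-1)) atTop (𝓝 0) :=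
    Tendsto.div_atTop tendsto_const_nhds hL
  apply tendsto_of_tendsto_of_tendsto_of_le_of_le'
    (g := fun r : ℕ => 3/5 - (12/5)/(2*(r:ℝ)-1)) (h := fun r : ℕ => 3/5 + (12/5)/(2*(r:ℝ)-1))
  · simpa using tendsto_const_nhds.sub h0
  · simpa using tendsto_const_nhds.add h0
  · filter_upwards [eventually_ge_atTop 1] with r hr
    obtain ⟨hlo, _⟩ := count_bounds r hr
    have hr' : (1:ℝ) ≤ (r:ℝ) := by exact_mod_cast hr
    have hLpos : (0:ℝ) < 2*(r:ℝ)-1 := by linarith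
    have hlo' : (2*(r:ℝ)-1) * (3*(2*(r:ℝ)-1) - 12) ≤ 5 * ((degFourSet ∩ box r).ncard : ℝ) := by
      exact_mod_cast hlo
    have e : 3/5 - (12/5)/(2*(r:ℝ)-1) = ((2*(r:ℝ)-1)*(3*(2*(r:ℝ)-1)-12))/(5*(2*(r:ℝ)-1)^2) := by
      field_simp
    rw [e, div_le_div_iff₀ (by positivity) (by positivity)]
    calc (2*(r:ℝ)-1)*(3*(2*(r:ℝ)-1)-12) * (2*(r:ℝ)-1)^2
        ≤ (5 * ((degFourSet ∩ box r).ncard : ℝ)) * (2*(r:ℝ)-1)^2 :=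
          mul_le_mul_of_nonneg_right hlo' (by positivity)
      _ = ((degFourSet ∩ box r).ncard : ℝ) * (5*(2*(r:ℝ)-1)^2) := by ring
  · filter_upwards [eventually_ge_atTop 1] with r hr
    obtain ⟨_, hhi⟩ := count_bounds r hr
    have hr' : (1:ℝ) ≤ (r:ℝ) := by exact_mod_cast hr
    have hLpos : (0:ℝ) < 2*(r:ℝ)-1 := by linarith
    have hhi' : 5 * ((degFourSet ∩ box r).ncard : ℝ) ≤ (2*(r:ℝ)-1) * (3*(2*(r:ℝ)-1) + 12) := by
      exact_mod_cast hhi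
    have e : 3/5 + (12/5)/(2*(r:ℝ)-1) = ((2*(r:ℝ)-1)*(3*(2*(r:ℝ)-1)+12))/(5*(2*(r:ℝ)-1)^2) := by
      field_simp
    rw [e, div_le_div_iff₀ (by positivity) (by positivity)]
    calc ((degFourSet ∩ box r).ncard : ℝ) * (5*(2*(r:ℝ)-1)^2)
        = (5 * ((degFourSet ∩ box r).ncard : ℝ)) * (2*(r:ℝ)-1)^2 := by ring
      _ ≤ ((2*(r:ℝ)-1)*(3*(2*(r:ℝ)-1)+12)) * (2*(r:ℝ)-1)^2 :=
          mul_le_mul_of_nonneg_right hhi' (by positivity)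

theorem degFourSet_degree_four_density :
    (∀ x ∈ degFourSet, nbrCount degFourSet x ≤ 4) ∧
    HasDensity degFourSet (3 / 5) := by
  exact ⟨part1, part2⟩
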